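/- At the point (r,s,t) = (1/8, 0, 3/8) all three auxiliary functions vanish: σ(1/8, 0, 3/8) = 0, τ(1/8, 0, 3/8) = 0 and ρ(1/8, 0, 3/8) = 0. -/

import Mathlib

noncomputable section
open Complex

/-- `σ(r,s,t) = (1/4)(e^{2πir} + e^{2πi(s−r)} + e^{−2πit} + e^{2πi(t−s)})`. -/
def σf (r s t : ℝ) : ℂ := (1/4) * (Complex.exp (2 * Real.pi * Complex.I * r)
  + Complex.exp (2 * Real.pi * Complex.I * (s - r))
  + Complex.exp (-(2 * Real.pi * Complex.I * t))
  + Complex.exp (2 * Real.pi * Complex.I * (t - s)))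

/-- `τ(r,s,t) = (1/6)(e^{−2πis} + e^{2πis} + e^{2πi(r−t)} + e^{2πi(s−r−t)} + e^{2πi(t−r)} + e^{2πi(r−s+t)})`. -/
def τf (r s t : ℝ) : ℂ := (1/6) * (Complex.exp (-(2 * Real.pi * Complex.I * s))
  + Complex.exp (2 * Real.pi * Complex.I * s)
  + Complex.exp (2 * Real.pi * Complex.I * (r - t))
  + Complex.exp (2 * Real.pi * Complex.I * (s - r - t))
  + Complex.exp (2 * Real.pi * Complex.I * (t - r))
  + Complex.exp (2 * Real.pi * Complex.I * (r - s + t)))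

/-- `ρ(r,s,t) = (1/4)(e^{−2πir} + e^{2πi(r−s)} + e^{2πi(s−t)} + e^{2πit})`. -/
def ρf (r s t : ℝ) : ℂ := (1/4) * (Complex.exp (-(2 * Real.pi * Complex.I * r))
  + Complex.exp (2 * Real.pi * Complex.I * (r - s))
  + Complex.exp (2 * Real.pi * Complex.I * (s - t))
  + Complex.exp (2 * Real.pi * Complex.I * t))

/-! At `(1/8, 0, 3/8)` the exponentials in each of `σ`, `τ`, `ρ` pair off into antipodal points
`e^{iθ}`, `e^{i(θ + π)}` of the unit circle, so every sum cancels. -/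

theorem exp_add_exp_eq_zero_of_eq_add_pi_mul_I {z w : ℂ} (h : z = w + Real.pi * I) :
    exp z + exp w = 0 := by
  rw [h, exp_add_pi_mul_I, neg_add_cancel]

theorem σf_one_eighth_zero_three_eighths : σf (1/8) 0 (3/8) = 0 := by
  have h₁ := exp_add_exp_eq_zero_of_eq_add_pi_mul_I
    (z := 2 * Real.pi * I * (1/8 : ℝ)) (w := -(2 * Real.pi * I * (3/8 : ℝ))) (by push_cast; ring)
  have h₂ := exp_add_exp_eq_zero_of_eq_add_pi_mul_I
    (z := 2 * Real.pi * I * ((3/8 : ℝ) - (0 : ℝ))) (w := 2 * Real.pi * I * ((0 : ℝ) - (1/8 : ℝ)))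
    (by push_cast; ring)
  rw [σf]
  linear_combination (1/4 : ℂ) * (h₁ + h₂)

theorem τf_one_eighth_zero_three_eighths : τf (1/8) 0 (3/8) = 0 := by
  have h₁ := exp_add_exp_eq_zero_of_eq_add_pi_mul_I
    (z := 2 * Real.pi * I * ((1/8 : ℝ) - (0 : ℝ) + (3/8 : ℝ))) (w := -(2 * Real.pi * I * (0 : ℝ)))
    (by push_cast; ring)
  have h₂ := exp_add_exp_eq_zero_of_eq_add_pi_mul_I
    (z := 2 * Real.pi * I * (0 : ℝ)) (w := 2 * Real.pi * I * ((0 : ℝ) - (1/8 : ℝ) - (3/8 : ℝ)))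
    (by push_cast; ring)
  have h₃ := exp_add_exp_eq_zero_of_eq_add_pi_mul_I
    (z := 2 * Real.pi * I * ((3/8 : ℝ) - (1/8 : ℝ))) (w := 2 * Real.pi * I * ((1/8 : ℝ) - (3/8 : ℝ)))
    (by push_cast; ring)
  rw [τf]
  linear_combination (1/6 : ℂ) * (h₁ + h₂ + h₃)

theorem ρf_one_eighth_zero_three_eighths : ρf (1/8) 0 (3/8) = 0 := by
  have h₁ := exp_add_exp_eq_zero_of_eq_add_pi_mul_I
    (z := 2 * Real.pi * I * ((1/8 : ℝ) - (0 : ℝ))) (w := 2 * Real.pi * I * ((0 : ℝ) - (3/8 : ℝ)))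
    (by push_cast; ring)
  have h₂ := exp_add_exp_eq_zero_of_eq_add_pi_mul_I
    (z := 2 * Real.pi * I * (3/8 : ℝ)) (w := -(2 * Real.pi * I * (1/8 : ℝ))) (by push_cast; ring)
  rw [ρf]
  linear_combination (1/4 : ℂ) * (h₁ + h₂)

/-- at `(r,s,t) = (1/8, 0, 3/8)` all three auxiliary functions vanish. -/
theorem sigma_tau_rho_vanish :
    σf (1/8) 0 (3/8) = 0 ∧ τf (1/8) 0 (3/8) = 0 ∧ ρf (1/8) 0 (3/8) = 0 :=
  ⟨σf_one_eighth_zero_three_eighths, τf_one_eighth_zero_three_eighths,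
    ρf_one_eighth_zero_three_eighths⟩
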